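/- Every von Neumann regular semigroup that is word-hyperbolic is 1-extendable. -/

import Mathlib

/-- Evaluation of a word over `A` in `S^1` (the semigroup `S` with a new identity
adjoined), where `f : A → S`. The empty word evaluates to the adjoined identity,
and a nonempty word to the product of its letters in `S`. -/
def evalW {A S : Type*} [Semigroup S] (f : A → S) (w : List A) : WithOne S :=
  (w.map (fun a => (f a : WithOne S))).prod

/-- The multiplication table of a semigroup with respect to a combing `R`, with
equality interpreted in `S^1` (which agrees with equality in `S` for nonempty
words, and lets `ε` represent the adjoined identity). The alphabet is `A ⊕ Bool`,
where `Sum.inr false` plays the role of `#1` and `Sum.inr true` of `#2`. -/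
def tableS {A S : Type*} [Semigroup S] (f : A → S) (R : Language A) :
    Language (A ⊕ Bool) :=
  {w | ∃ u v x : List A, u ∈ R ∧ v ∈ R ∧ x ∈ R ∧
    evalW f (u ++ v) = evalW f x ∧
    w = u.map Sum.inl ++ [Sum.inr false] ++ v.map Sum.inl ++ [Sum.inr true] ++
      (x.map Sum.inl).reverse}

/-!
The table of `R ∪ {ε}` consists of the table `T(R)`, the word `#₁#₂`, and the entries with exactly
one of `u`, `v` empty: a nonempty word never represents the adjoined identity. Von Neumann
regularity `f a * y * f a = f a` gives, for each letter `a`, a word `U a ∈ R` representing the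
left identity `f a * y` of `f a`. Hence `#₁ a v' #₂ xʳ` is a table entry iff
`U a #₁ a v' #₂ xʳ ∈ T(R)`, so the entries with `u = ε` form `⋃ₐ #₁ a · (U a #₁ a)⁻¹ T(R)`; those
with `v = ε` are obtained in the same way after inserting `#₁` in front of `#₂` by a homomorphism.
Context-free languages are closed under finite unions, concatenation, left quotients by words and
homomorphic images.
-/

def Symbol.mapNonterminal {T N N' : Type*} (φ : N → N') : Symbol T N → Symbol T N'
  | .terminal t => .terminal t
  | .nonterminal X => .nonterminal (φ X)

def ContextFreeRule.mapNonterminal {T N N' : Type*} (φ : N → N')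
    (r : ContextFreeRule T N) : ContextFreeRule T N' :=
  ⟨φ r.input, r.output.map (Symbol.mapNonterminal φ)⟩

def Language.homImage {α β : Type*} (φ : α → List β) (L : Language α) : Language β :=
  (·.flatMap φ) '' L

theorem Language.mem_homImage {α β : Type*} {φ : α → List β} {L : Language α} {y : List β} :
    y ∈ L.homImage φ ↔ ∃ w ∈ L, w.flatMap φ = y :=
  Iff.rfl

def Symbol.homImage {T T' N : Type*} (φ : T → List T') : Symbol T N → List (Symbol T' N)
  | .terminal t => (φ t).map .terminal
  | .nonterminal X => [.nonterminal X]

theorem List.exists_of_flatMap_eq_cons {α β : Type*} {f : α → List β} {l : List α} {y : β}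
    {ys : List β} (h : l.flatMap f = y :: ys) :
    ∃ l₁ a l₂ bs, l = l₁ ++ a :: l₂ ∧ (∀ x ∈ l₁, f x = []) ∧ f a = y :: bs ∧
      ys = bs ++ l₂.flatMap f := by
  rw [List.flatMap_def, List.flatten_eq_cons_iff] at h
  obtain ⟨as, bs, cs, hl, has, rfl⟩ := h
  obtain ⟨l₁, l', rfl, rfl, hl'⟩ := List.map_eq_append_iff.mp hl
  obtain ⟨a, l₂, rfl, ha, rfl⟩ := List.map_eq_cons_iff.mp hl'
  exact ⟨l₁, a, l₂, bs, rfl, fun x hx => has _ (List.mem_map_of_mem hx), ha,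
    by simp [List.flatMap_def]⟩

namespace ContextFreeGrammar

variable {T : Type*}

/-- `Parses g s w`: the sentential form `s` derives the word `w`. Derivations organised as parse
forests, one tree per symbol of `s`, can be taken apart by structural induction. -/
inductive Parses (g : ContextFreeGrammar T) : List (Symbol T g.NT) → List T → Prop
  | nil : Parses g [] []
  | terminal {s : List (Symbol T g.NT)} {w : List T} (c : T) (h : Parses g s w) :
      Parses g (.terminal c :: s) (c :: w)
  | nonterminal {X : g.NT} {β s : List (Symbol T g.NT)} {w₁ w₂ : List T}
      (hr : ⟨X, β⟩ ∈ g.rules) (h₁ : Parses g β w₁) (h₂ : Parses g s w₂) :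
      Parses g (.nonterminal X :: s) (w₁ ++ w₂)

namespace Parses

variable {g : ContextFreeGrammar T}

lemma append {s₁ s₂ : List (Symbol T g.NT)} {w₁ w₂ : List T}
    (h₁ : Parses g s₁ w₁) (h₂ : Parses g s₂ w₂) : Parses g (s₁ ++ s₂) (w₁ ++ w₂) := by
  induction h₁ with
  | nil => exact h₂
  | terminal c _ ih => exact .terminal c ih
  | nonterminal hr hβ _ _ ih => simpa using Parses.nonterminal hr hβ ih

lemma exists_of_append {s₁ s₂ : List (Symbol T g.NT)} {w : List T}
    (h : Parses g (s₁ ++ s₂) w) :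
    ∃ w₁ w₂, w = w₁ ++ w₂ ∧ Parses g s₁ w₁ ∧ Parses g s₂ w₂ := by
  induction s₁ generalizing w with
  | nil => exact ⟨[], w, rfl, .nil, h⟩
  | cons σ s₁ ih =>
    cases h with
    | terminal c h =>
      obtain ⟨w₁, w₂, rfl, h₁, h₂⟩ := ih h
      exact ⟨c :: w₁, w₂, rfl, .terminal c h₁, h₂⟩
    | nonterminal hr hβ h =>
      obtain ⟨w₁, w₂, rfl, h₁, h₂⟩ := ih h
      exact ⟨_ ++ w₁, w₂, by simp, .nonterminal hr hβ h₁, h₂⟩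

lemma single {X : g.NT} {β : List (Symbol T g.NT)} {w : List T}
    (hr : ⟨X, β⟩ ∈ g.rules) (h : Parses g β w) : Parses g [.nonterminal X] w := by
  simpa using Parses.nonterminal hr h .nil

lemma exists_of_single {X : g.NT} {w : List T} (h : Parses g [.nonterminal X] w) :
    ∃ β, ⟨X, β⟩ ∈ g.rules ∧ Parses g β w := by
  rcases h with _ | _ | ⟨hr, h, ⟨⟩⟩
  exact ⟨_, hr, by simpa using h⟩

lemma map_terminal (w : List T) : Parses g (w.map .terminal) w := by
  induction w with
  | nil => exact .nil
  | cons c w ih => exact .terminal c ih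

lemma eq_of_map_terminal {w v : List T} (h : Parses g (w.map .terminal) v) : v = w := by
  induction w generalizing v with
  | nil => cases h; rfl
  | cons c w ih => cases h with
    | terminal _ h => rw [ih h]

lemma derives {s : List (Symbol T g.NT)} {w : List T} (h : Parses g s w) :
    g.Derives s (w.map .terminal) := by
  induction h with
  | nil => rfl
  | terminal c _ ih => exact ih.append_left [.terminal c]
  | @nonterminal X β s _ _ hr _ _ ih₁ ih₂ =>
    have step : g.Produces (.nonterminal X :: s) (β ++ s) :=
      ⟨⟨X, β⟩, hr, by simpa using ContextFreeRule.rewrites_of_exists_parts ⟨X, β⟩ [] s⟩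
    rw [List.map_append]
    exact step.trans_derives ((ih₁.append_right _).trans (ih₂.append_left _))

lemma of_produces {u v : List (Symbol T g.NT)} {w : List T}
    (hp : g.Produces u v) (h : Parses g v w) : Parses g u w := by
  obtain ⟨r, hr, hrw⟩ := hp
  obtain ⟨p, q, rfl, rfl⟩ := hrw.exists_parts
  obtain ⟨w₁₂, w₃, rfl, h₁₂, h₃⟩ := h.exists_of_append
  obtain ⟨w₁, w₂, rfl, h₁, h₂⟩ := h₁₂.exists_of_append
  exact (h₁.append (single hr h₂)).append h₃

end Parses

lemma parses_iff_derives {g : ContextFreeGrammar T} {s : List (Symbol T g.NT)} {w : List T} :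
    Parses g s w ↔ g.Derives s (w.map .terminal) := by
  refine ⟨Parses.derives, fun h => ?_⟩
  induction h using Relation.ReflTransGen.head_induction_on with
  | refl => exact .map_terminal w
  | head hp _ ih => exact ih.of_produces hp

lemma mem_language_iff_parses {g : ContextFreeGrammar T} {w : List T} :
    w ∈ g.language ↔ Parses g [.nonterminal g.initial] w :=
  parses_iff_derives.symm

section Rename

variable {g g' : ContextFreeGrammar T} {φ : g.NT → g'.NT}

lemma Parses.mapNonterminal (hφ : ∀ r ∈ g.rules, r.mapNonterminal φ ∈ g'.rules)
    {s : List (Symbol T g.NT)} {w : List T} (h : Parses g s w) :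
    Parses g' (s.map (Symbol.mapNonterminal φ)) w := by
  induction h with
  | nil => exact .nil
  | terminal c _ ih => exact .terminal c ih
  | nonterminal hr _ _ ih₁ ih₂ => exact .nonterminal (hφ _ hr) ih₁ ih₂

lemma Parses.of_mapNonterminal (hφ : Function.Injective φ)
    (hrules : ∀ r' ∈ g'.rules, ∀ X, r'.input = φ X → ∃ r ∈ g.rules, r.mapNonterminal φ = r')
    {s : List (Symbol T g.NT)} {w : List T}
    (h : Parses g' (s.map (Symbol.mapNonterminal φ)) w) : Parses g s w := by
  generalize hs : s.map (Symbol.mapNonterminal φ) = s' at h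
  induction h generalizing s with
  | nil => obtain rfl := List.map_eq_nil_iff.mp hs; exact .nil
  | terminal c _ ih =>
    obtain ⟨σ, s, rfl, hσ, rfl⟩ := List.map_eq_cons_iff.mp hs
    cases σ with
    | terminal => cases hσ; exact .terminal c (ih rfl)
    | nonterminal => cases hσ
  | nonterminal hr _ _ ih₁ ih₂ =>
    obtain ⟨σ, s, rfl, hσ, rfl⟩ := List.map_eq_cons_iff.mp hs
    cases σ with
    | terminal => cases hσ
    | nonterminal X =>
      cases hσ
      obtain ⟨⟨Y, β⟩, hβ, hr'⟩ := hrules _ hr X rfl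
      simp only [ContextFreeRule.mapNonterminal, ContextFreeRule.mk.injEq] at hr'
      obtain ⟨rfl, rfl⟩ := hr'.imp_left (@hφ _ _)
      exact .nonterminal hβ (ih₁ rfl) (ih₂ rfl)

end Rename

section Constructions

open Classical in
/-- The initial nonterminal is arbitrary: `sum` is only used through `withStart`. -/
noncomputable abbrev sum (g₁ g₂ : ContextFreeGrammar T) : ContextFreeGrammar T where
  NT := g₁.NT ⊕ g₂.NT
  initial := .inl g₁.initial
  rules := g₁.rules.image (·.mapNonterminal .inl) ∪ g₂.rules.image (·.mapNonterminal .inr)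

open Classical in
noncomputable abbrev withStart (g : ContextFreeGrammar T) (B : Finset (List (Symbol T g.NT))) :
    ContextFreeGrammar T where
  NT := Option g.NT
  initial := none
  rules := B.image (fun β => ⟨none, β.map (Symbol.mapNonterminal some)⟩) ∪
    g.rules.image (·.mapNonterminal some)

def zero : ContextFreeGrammar T := ⟨Unit, (), ∅⟩

variable {g₁ g₂ g : ContextFreeGrammar T}

lemma mem_sum_rules {r : ContextFreeRule T (g₁.NT ⊕ g₂.NT)} :
    r ∈ (g₁.sum g₂).rules ↔ (∃ r₁ ∈ g₁.rules, r₁.mapNonterminal .inl = r) ∨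
      ∃ r₂ ∈ g₂.rules, r₂.mapNonterminal .inr = r := by
  classical
  exact Finset.mem_union.trans (or_congr Finset.mem_image Finset.mem_image)

lemma mem_withStart_rules {B : Finset (List (Symbol T g.NT))}
    {r : ContextFreeRule T (Option g.NT)} :
    r ∈ (g.withStart B).rules ↔ (∃ β ∈ B, ⟨none, β.map (Symbol.mapNonterminal some)⟩ = r) ∨
      ∃ r₀ ∈ g.rules, r₀.mapNonterminal some = r := by
  classical
  exact Finset.mem_union.trans (or_congr Finset.mem_image Finset.mem_image)

lemma parses_sum_inl_iff {s : List (Symbol T g₁.NT)} {w : List T} :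
    Parses (g₁.sum g₂) (s.map (Symbol.mapNonterminal .inl)) w ↔ Parses g₁ s w := by
  refine ⟨Parses.of_mapNonterminal Sum.inl_injective ?_, Parses.mapNonterminal ?_⟩
  · intro r' hr' X hX
    rw [mem_sum_rules] at hr'
    rcases hr' with ⟨r, hr, rfl⟩ | ⟨r, -, rfl⟩
    · exact ⟨r, hr, rfl⟩
    · cases hX
  · intro r hr
    rw [mem_sum_rules]
    exact .inl ⟨r, hr, rfl⟩

lemma parses_sum_inr_iff {s : List (Symbol T g₂.NT)} {w : List T} :
    Parses (g₁.sum g₂) (s.map (Symbol.mapNonterminal .inr)) w ↔ Parses g₂ s w := by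
  refine ⟨Parses.of_mapNonterminal Sum.inr_injective ?_, Parses.mapNonterminal ?_⟩
  · intro r' hr' X hX
    rw [mem_sum_rules] at hr'
    rcases hr' with ⟨r, -, rfl⟩ | ⟨r, hr, rfl⟩
    · cases hX
    · exact ⟨r, hr, rfl⟩
  · intro r hr
    rw [mem_sum_rules]
    exact .inr ⟨r, hr, rfl⟩

lemma mem_withStart_language {B : Finset (List (Symbol T g.NT))} {w : List T} :
    w ∈ (g.withStart B).language ↔ ∃ β ∈ B, Parses g β w := by
  have hrules : ∀ r ∈ g.rules, r.mapNonterminal some ∈ (g.withStart B).rules := by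
    intro r hr
    rw [mem_withStart_rules]
    exact .inr ⟨r, hr, rfl⟩
  have hpull : ∀ r' ∈ (g.withStart B).rules, ∀ X, r'.input = some X →
      ∃ r ∈ g.rules, r.mapNonterminal some = r' := by
    intro r' hr' X hX
    rw [mem_withStart_rules] at hr'
    rcases hr' with ⟨β, -, rfl⟩ | ⟨r, hr, rfl⟩
    · cases hX
    · exact ⟨r, hr, rfl⟩
  rw [mem_language_iff_parses]
  constructor
  · intro h
    obtain ⟨β', hβ', h⟩ := h.exists_of_single
    rw [mem_withStart_rules] at hβ'
    rcases hβ' with ⟨β, hβ, hββ'⟩ | ⟨r, -, hr⟩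
    · cases hββ'
      exact ⟨β, hβ, h.of_mapNonterminal (Option.some_injective _) hpull⟩
    · cases hr
  · rintro ⟨β, hβ, h⟩
    refine Parses.single (β := β.map (Symbol.mapNonterminal some)) ?_ (h.mapNonterminal hrules)
    rw [mem_withStart_rules]
    exact .inl ⟨β, hβ, rfl⟩

lemma zero_language : (zero : ContextFreeGrammar T).language = 0 := by
  ext w
  simp only [mem_language_iff_parses, Language.notMem_zero, iff_false]
  intro h
  obtain ⟨β, hβ, -⟩ := h.exists_of_single
  exact Finset.notMem_empty _ hβ

end Constructions

section LeftQuotient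

variable (g : ContextFreeGrammar T) (c : T)

open Classical in
/-- The right-hand sides `β'` for which the quotient grammar gets a rule `inr X → β'` from a rule
`X → β`: after a nullable prefix of `β`, either the letter `c` itself is cut off, or the next
nonterminal `Y` is replaced by its quotient copy `inr Y`. -/
noncomputable def quotientBodies : List (Symbol T g.NT) → Finset (List (Symbol T (g.NT ⊕ g.NT)))
  | [] => ∅
  | .terminal t :: δ => if t = c then {δ.map (Symbol.mapNonterminal .inl)} else ∅
  | .nonterminal Y :: δ => insert (.nonterminal (.inr Y) :: δ.map (Symbol.mapNonterminal .inl))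
      (if Parses g [.nonterminal Y] [] then quotientBodies δ else ∅)

open Classical in
/-- The nonterminal `inr X` derives exactly the words `w` such that `X` derives `c :: w`. -/
noncomputable abbrev leftQuotient : ContextFreeGrammar T where
  NT := g.NT ⊕ g.NT
  initial := .inr g.initial
  rules := g.rules.image (·.mapNonterminal .inl) ∪
    g.rules.biUnion fun r => (g.quotientBodies c r.output).image fun β' => ⟨.inr r.input, β'⟩

variable {g c}

lemma mem_leftQuotient_rules {r : ContextFreeRule T (g.NT ⊕ g.NT)} :
    r ∈ (g.leftQuotient c).rules ↔ (∃ r₀ ∈ g.rules, r₀.mapNonterminal .inl = r) ∨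
      ∃ r₀ ∈ g.rules, ∃ β' ∈ g.quotientBodies c r₀.output, ⟨.inr r₀.input, β'⟩ = r := by
  simp only [Finset.mem_union, Finset.mem_image, Finset.mem_biUnion]

lemma parses_leftQuotient_inl_iff {s : List (Symbol T g.NT)} {w : List T} :
    Parses (g.leftQuotient c) (s.map (Symbol.mapNonterminal .inl)) w ↔ Parses g s w := by
  refine ⟨Parses.of_mapNonterminal Sum.inl_injective ?_, Parses.mapNonterminal ?_⟩
  · intro r' hr' X hX
    rcases mem_leftQuotient_rules.mp hr' with hr | ⟨r, -, β', -, rfl⟩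
    · exact hr
    · cases hX
  · exact fun r hr => mem_leftQuotient_rules.mpr (.inl ⟨r, hr, rfl⟩)

lemma parses_of_mem_quotientBodies {β : List (Symbol T g.NT)}
    {β' : List (Symbol T (g.NT ⊕ g.NT))} {w : List T} (hβ' : β' ∈ g.quotientBodies c β)
    (h : Parses (g.leftQuotient c) β' w)
    (hquot : ∀ Y s, β' = .nonterminal (.inr Y) :: s.map (Symbol.mapNonterminal .inl) →
      Parses g (.nonterminal Y :: s) (c :: w)) :
    Parses g β (c :: w) := by
  induction β with
  | nil => simp [quotientBodies] at hβ'
  | cons σ δ ih =>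
    cases σ with
    | terminal t =>
      simp only [quotientBodies] at hβ'
      split_ifs at hβ' with htc
      · obtain rfl := Finset.mem_singleton.mp hβ'
        exact htc ▸ .terminal t (parses_leftQuotient_inl_iff.mp h)
      · simp at hβ'
    | nonterminal Y =>
      simp only [quotientBodies, Finset.mem_insert] at hβ'
      rcases hβ' with rfl | hβ'
      · exact hquot Y δ rfl
      · split_ifs at hβ' with hY
        · exact hY.append (ih hβ')
        · simp at hβ'

lemma parses_cons_of_parses_leftQuotient {s' : List (Symbol T (g.leftQuotient c).NT)} {w : List T}
    (h : Parses (g.leftQuotient c) s' w) :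
    ∀ Y s, s' = .nonterminal (.inr Y) :: s.map (Symbol.mapNonterminal .inl) →
      Parses g (.nonterminal Y :: s) (c :: w) := by
  induction h with
  | nil => intro _ _ h; cases h
  | terminal => intro _ _ h; cases h
  | nonterminal hr h₁ h₂ ih₁ =>
    intro Y s hs
    obtain ⟨⟨⟩, rfl⟩ := List.cons.inj hs
    rcases mem_leftQuotient_rules.mp hr with ⟨r, -, hr⟩ | ⟨⟨Y, β⟩, hYβ, β', hβ', hr⟩
    · cases hr
    · cases hr
      exact .nonterminal hYβ (parses_of_mem_quotientBodies hβ' h₁ ih₁)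
        (parses_leftQuotient_inl_iff.mp h₂)

lemma exists_mem_quotientBodies_of_parses {s : List (Symbol T g.NT)} {t : List T}
    (h : Parses g s t) :
    ∀ w, t = c :: w → ∃ β' ∈ g.quotientBodies c s, Parses (g.leftQuotient c) β' w := by
  induction h with
  | nil => intro _ h; cases h
  | terminal c' h =>
    intro w hw
    obtain ⟨hc, rfl⟩ := List.cons.inj hw
    subst c'
    exact ⟨_, by simp [quotientBodies], parses_leftQuotient_inl_iff.mpr h⟩
  | @nonterminal X β s t₁ t₂ hr h₁ h₂ ih₁ ih₂ =>
    intro w hw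
    rcases t₁ with _ | ⟨c', w₁⟩
    · obtain ⟨β', hβ', h'⟩ := ih₂ w hw
      refine ⟨β', ?_, h'⟩
      simp [quotientBodies, Parses.single hr h₁, hβ']
    · obtain ⟨hc, rfl⟩ := List.cons.inj hw
      subst c'
      obtain ⟨β', hβ', h'⟩ := ih₁ w₁ rfl
      have hX : Parses (g.leftQuotient c) [.nonterminal (.inr X)] w₁ :=
        .single (mem_leftQuotient_rules.mpr (.inr ⟨⟨X, β⟩, hr, β', hβ', rfl⟩)) h'
      exact ⟨_, by simp [quotientBodies], hX.append (parses_leftQuotient_inl_iff.mpr h₂)⟩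

lemma leftQuotient_language : (g.leftQuotient c).language = g.language.leftQuotient [c] := by
  ext w
  rw [Language.mem_leftQuotient, mem_language_iff_parses, mem_language_iff_parses]
  constructor
  · intro h
    simpa using parses_cons_of_parses_leftQuotient h g.initial [] rfl
  · intro h
    obtain ⟨β', hβ', h'⟩ := exists_mem_quotientBodies_of_parses h w rfl
    simp [quotientBodies] at hβ'
    exact hβ' ▸ h'

end LeftQuotient

section HomImage

variable {T' : Type*}

open Classical in
noncomputable abbrev homImage (φ : T → List T') (g : ContextFreeGrammar T) :
    ContextFreeGrammar T' where
  NT := g.NT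
  initial := g.initial
  rules := g.rules.image fun r => ⟨r.input, r.output.flatMap (Symbol.homImage φ)⟩

variable {φ : T → List T'} {g : ContextFreeGrammar T}

lemma mem_homImage_rules {r : ContextFreeRule T' g.NT} : r ∈ (g.homImage φ).rules ↔
    ∃ r₀ ∈ g.rules, ⟨r₀.input, r₀.output.flatMap (Symbol.homImage φ)⟩ = r := by
  classical
  exact Finset.mem_image

lemma Parses.homImage {s : List (Symbol T g.NT)} {w : List T} (h : Parses g s w) :
    Parses (g.homImage φ) (s.flatMap (Symbol.homImage φ)) (w.flatMap φ) := by
  induction h with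
  | nil => exact .nil
  | terminal c _ ih => exact (Parses.map_terminal (φ c)).append ih
  | nonterminal hr _ _ ih₁ ih₂ =>
    rw [List.flatMap_cons, List.flatMap_append]
    exact .nonterminal (mem_homImage_rules.mpr ⟨_, hr, rfl⟩) ih₁ ih₂

lemma exists_erased_terminals {s : List (Symbol T g.NT)}
    (h : ∀ σ ∈ s, Symbol.homImage φ σ = []) :
    ∃ ts : List T, s = ts.map .terminal ∧ ts.flatMap φ = [] := by
  induction s with
  | nil => exact ⟨[], rfl, rfl⟩
  | cons σ s ih =>
    obtain ⟨ts, rfl, hts⟩ := ih fun σ' hσ' => h σ' (List.mem_cons_of_mem _ hσ')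
    have hσ := h σ List.mem_cons_self
    cases σ with
    | terminal t => exact ⟨t :: ts, rfl, by simpa [Symbol.homImage, hts] using hσ⟩
    | nonterminal => cases hσ

/-- The prefix `p` holds the part of the image of a terminal that is still to be read. -/
lemma exists_parses_of_parses_homImage {s' : List (Symbol T' (g.homImage φ).NT)} {w' : List T'}
    (h : Parses (g.homImage φ) s' w') :
    ∀ p s, s' = p.map .terminal ++ s.flatMap (Symbol.homImage φ) →
      ∃ w, w' = p ++ w.flatMap φ ∧ Parses g s w := by
  induction h with
  | nil =>
    intro p s hs
    obtain ⟨hp, hs⟩ := List.append_eq_nil_iff.mp hs.symm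
    obtain rfl := List.map_eq_nil_iff.mp hp
    obtain ⟨ts, rfl, hts⟩ :=
      exists_erased_terminals (List.flatMap_eq_nil_iff.mp (by simpa using hs))
    exact ⟨ts, by simp [hts], .map_terminal ts⟩
  | terminal c _ ih =>
    rintro (_ | ⟨d, p⟩) s hs
    · obtain ⟨s₁, σ, s₂, bs, rfl, hs₁, hσ, hs₂⟩ := List.exists_of_flatMap_eq_cons hs.symm
      obtain ⟨ts, rfl, hts⟩ := exists_erased_terminals hs₁
      cases σ with
      | nonterminal => cases hσ
      | terminal t =>
        obtain ⟨cs, hφt, rfl⟩ : ∃ cs, φ t = c :: cs ∧ bs = cs.map .terminal := by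
          simp only [Symbol.homImage, List.map_eq_cons_iff] at hσ
          obtain ⟨c', cs, hφt, ⟨⟩, rfl⟩ := hσ
          exact ⟨cs, hφt, rfl⟩
        obtain ⟨w, rfl, hw⟩ := ih cs s₂ hs₂
        exact ⟨ts ++ t :: w, by simp [hts, hφt], (Parses.map_terminal ts).append (.terminal t hw)⟩
    · obtain ⟨⟨⟩, hs⟩ := List.cons.inj hs
      obtain ⟨w, rfl, hw⟩ := ih p s (by simpa using hs)
      exact ⟨w, rfl, hw⟩
  | @nonterminal X β' s₀ w₁ w₂ hr _ _ ih₁ ih₂ =>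
    rintro (_ | ⟨d, p⟩) s hs
    · obtain ⟨s₁, σ, s₂, bs, rfl, hs₁, hσ, hs₂⟩ := List.exists_of_flatMap_eq_cons hs.symm
      obtain ⟨ts, rfl, hts⟩ := exists_erased_terminals hs₁
      cases σ with
      | terminal t =>
        simp only [Symbol.homImage, List.map_eq_cons_iff] at hσ
        obtain ⟨_, _, _, ⟨⟩, _⟩ := hσ
      | nonterminal Y =>
        obtain ⟨⟨⟩, rfl⟩ := List.cons.inj hσ
        obtain ⟨⟨Y, β⟩, hβ, ⟨⟩⟩ := mem_homImage_rules.mp hr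
        obtain ⟨u, rfl, hu⟩ := ih₁ [] β rfl
        obtain ⟨v, rfl, hv⟩ := ih₂ [] s₂ (by simpa using hs₂)
        exact ⟨ts ++ (u ++ v), by simp [hts],
          (Parses.map_terminal ts).append (.nonterminal hβ hu hv)⟩
    · cases List.cons.inj hs |>.1

theorem homImage_language (φ : T → List T') (g : ContextFreeGrammar T) :
    (g.homImage φ).language = g.language.homImage φ := by
  ext w'
  rw [mem_language_iff_parses]
  constructor
  · intro h
    obtain ⟨w, rfl, hw⟩ := exists_parses_of_parses_homImage h [] [.nonterminal g.initial] rfl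
    exact ⟨w, mem_language_iff_parses.mpr hw, rfl⟩
  · rintro ⟨w, hw, rfl⟩
    simpa [Symbol.homImage] using (mem_language_iff_parses.mp hw).homImage (φ := φ)

end HomImage

end ContextFreeGrammar

namespace Language

open ContextFreeGrammar

variable {T : Type*} {L₁ L₂ : Language T}

theorem isRegular_singleton_nil : ({[]} : Language T).IsRegular := by
  refine ⟨Bool, inferInstance, ⟨fun _ _ => false, true, {true}⟩, Language.ext fun w => ?_⟩
  rcases w with _ | ⟨a, t⟩
  · exact iff_of_true rfl rfl
  · refine iff_of_false ?_ (List.cons_ne_nil a t)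
    simp [DFA.mem_accepts, DFA.eval, DFA.evalFrom, List.foldl_fixed']

theorem mem_sum {ι : Type*} {s : Finset ι} {L : ι → Language T} {w : List T} :
    w ∈ ∑ i ∈ s, L i ↔ ∃ i ∈ s, w ∈ L i := by
  classical
  induction s using Finset.induction_on with
  | empty => simp
  | insert i s hi ih => simp [Finset.sum_insert hi, mem_add, ih]

theorem mem_singleton_mul {p w : List T} {L : Language T} :
    w ∈ {p} * L ↔ ∃ z ∈ L, w = p ++ z := by
  simp only [mem_mul]
  exact ⟨fun ⟨_, rfl, z, hz, h⟩ => ⟨z, hz, h.symm⟩, fun ⟨z, hz, h⟩ => ⟨p, rfl, z, hz, h.symm⟩⟩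

theorem IsContextFree.add (h₁ : L₁.IsContextFree) (h₂ : L₂.IsContextFree) :
    (L₁ + L₂).IsContextFree := by
  classical
  obtain ⟨g₁, rfl⟩ := h₁
  obtain ⟨g₂, rfl⟩ := h₂
  refine ⟨(g₁.sum g₂).withStart {[.nonterminal (.inl g₁.initial)],
    [.nonterminal (.inr g₂.initial)]}, Language.ext fun w => ?_⟩
  rw [mem_withStart_language, mem_add, mem_language_iff_parses, mem_language_iff_parses]
  simp only [Finset.mem_insert, Finset.mem_singleton, exists_eq_or_imp, exists_eq_left]
  exact or_congr (parses_sum_inl_iff (s := [.nonterminal g₁.initial]))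
    (parses_sum_inr_iff (s := [.nonterminal g₂.initial]))

theorem IsContextFree.mul (h₁ : L₁.IsContextFree) (h₂ : L₂.IsContextFree) :
    (L₁ * L₂).IsContextFree := by
  obtain ⟨g₁, rfl⟩ := h₁
  obtain ⟨g₂, rfl⟩ := h₂
  refine ⟨(g₁.sum g₂).withStart {[.nonterminal (.inl g₁.initial), .nonterminal (.inr g₂.initial)]},
    Language.ext fun w => ?_⟩
  rw [mem_withStart_language, mem_mul]
  simp only [Finset.mem_singleton, exists_eq_left, mem_language_iff_parses]
  constructor
  · intro h
    obtain ⟨w₁, w₂, rfl, h₁, h₂⟩ := Parses.exists_of_append (s₁ := [_]) (s₂ := [_]) h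
    exact ⟨w₁, (parses_sum_inl_iff (s := [_])).mp h₁, w₂, (parses_sum_inr_iff (s := [_])).mp h₂,
      rfl⟩
  · rintro ⟨w₁, h₁, w₂, h₂, rfl⟩
    exact ((parses_sum_inl_iff (s := [_])).mpr h₁).append ((parses_sum_inr_iff (s := [_])).mpr h₂)

theorem isContextFree_zero : (0 : Language T).IsContextFree :=
  ⟨zero, zero_language⟩

theorem isContextFree_singleton (p : List T) : ({p} : Language T).IsContextFree := by
  refine ⟨zero.withStart {p.map .terminal}, Language.ext fun w => ?_⟩
  rw [mem_withStart_language]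
  simp only [Finset.mem_singleton, exists_eq_left]
  exact ⟨Parses.eq_of_map_terminal, fun h => by rw [show w = p from h]; exact .map_terminal p⟩

theorem IsContextFree.sum {ι : Type*} (s : Finset ι) {L : ι → Language T}
    (h : ∀ i ∈ s, (L i).IsContextFree) : (∑ i ∈ s, L i).IsContextFree :=
  Finset.sum_induction L IsContextFree (fun _ _ => .add) isContextFree_zero h

theorem IsContextFree.leftQuotient {L : Language T}
    (h : L.IsContextFree) (x : List T) : (L.leftQuotient x).IsContextFree := by
  induction x generalizing L with
  | nil => exact h
  | cons c x ih =>
    obtain ⟨g, rfl⟩ := h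
    rw [← List.singleton_append, leftQuotient_append]
    exact ih ⟨g.leftQuotient c, g.leftQuotient_language⟩

theorem IsContextFree.homImage {T' : Type*} {L : Language T} (h : L.IsContextFree)
    (φ : T → List T') : (L.homImage φ).IsContextFree := by
  obtain ⟨g, rfl⟩ := h
  exact ⟨g.homImage φ, g.homImage_language φ⟩

end Language

section Table

variable {A S : Type*} [Semigroup S] (f : A → S)

lemma evalW_append (u v : List A) : evalW f (u ++ v) = evalW f u * evalW f v := by
  simp [evalW]

lemma evalW_cons (a : A) (t : List A) : evalW f (a :: t) = f a * evalW f t := by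
  simp [evalW]

lemma evalW_eq_one_iff {w : List A} : evalW f w = 1 ↔ w = [] := by
  refine ⟨fun h => ?_, fun h => h ▸ rfl⟩
  rcases w with _ | ⟨a, t⟩
  · rfl
  · rw [evalW_cons] at h
    generalize evalW f t = y at h
    cases y with
    | one => exact absurd h WithOne.coe_ne_one
    | coe s => exact absurd ((WithOne.coe_mul (f a) s).trans h) WithOne.coe_ne_one

def tableWord (u v x : List A) : List (A ⊕ Bool) :=
  u.map .inl ++ [.inr false] ++ v.map .inl ++ [.inr true] ++ (x.map .inl).reverse

lemma mem_tableS {R : Language A} {w : List (A ⊕ Bool)} : w ∈ tableS f R ↔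
    ∃ u ∈ R, ∃ v ∈ R, ∃ x ∈ R, evalW f (u ++ v) = evalW f x ∧ w = tableWord u v x := by
  simp only [tableS, tableWord, exists_and_left]
  rfl

lemma map_inl_append_inr_inj {b : Bool} {u u' : List A} {β β' : List (A ⊕ Bool)}
    (h : u.map .inl ++ .inr b :: β = u'.map .inl ++ .inr b :: β') : u = u' ∧ β = β' := by
  induction u generalizing u' with
  | nil => cases u' <;> simp_all
  | cons a u ih =>
    cases u' with
    | nil => simp at h
    | cons a' u' =>
      simp only [List.map_cons, List.cons_append, List.cons.injEq, Sum.inl.injEq] at h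
      obtain ⟨rfl, h⟩ := h
      exact (ih h).imp_left (congrArg _)

lemma mem_leftQuotient_tableS {R : Language A} {p : List A} {a : A} {z : List (A ⊕ Bool)} :
    z ∈ (tableS f R).leftQuotient (p.map .inl ++ [.inr false, .inl a]) ↔
      ∃ v x, p ∈ R ∧ a :: v ∈ R ∧ x ∈ R ∧ evalW f (p ++ a :: v) = evalW f x ∧
        z = v.map .inl ++ .inr true :: (x.map .inl).reverse := by
  rw [Language.mem_leftQuotient, mem_tableS]
  constructor
  · rintro ⟨u, hu, v, hv, x, hx, heval, hw⟩
    simp only [tableWord, List.append_assoc, List.cons_append, List.nil_append] at hw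
    obtain ⟨rfl, hz⟩ := map_inl_append_inr_inj hw
    rcases v with _ | ⟨a', v⟩
    · simp at hz
    · obtain ⟨⟨⟩, rfl⟩ := List.cons.inj hz
      exact ⟨v, x, hu, hv, hx, heval, rfl⟩
  · rintro ⟨v, x, hp, hv, hx, heval, rfl⟩
    exact ⟨p, hp, a :: v, hv, x, hx, heval, by simp [tableWord]⟩

def insertMarkOne : A ⊕ Bool → List (A ⊕ Bool)
  | Sum.inr true => [Sum.inr false, Sum.inr true]
  | c => [c]

lemma flatMap_insertMarkOne (v x : List A) :
    (v.map Sum.inl ++ Sum.inr true :: (x.map Sum.inl).reverse).flatMap insertMarkOne =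
      v.map Sum.inl ++ Sum.inr false :: Sum.inr true :: (x.map Sum.inl).reverse := by
  simp [← List.map_reverse, List.flatMap_map, insertMarkOne, ← List.map_eq_flatMap]

def tableLeftNil (R : Language A) : Language (A ⊕ Bool) :=
  {w | ∃ v ∈ R, ∃ x ∈ R, evalW f v = evalW f x ∧ w = tableWord [] v x}

def tableRightNil (R : Language A) : Language (A ⊕ Bool) :=
  {w | ∃ u ∈ R, ∃ x ∈ R, evalW f u = evalW f x ∧ w = tableWord u [] x}

lemma tableS_add_nil (R : Language A) :
    tableS f (R + {[]}) =
      tableS f R + {tableWord [] [] []} + tableLeftNil f R + tableRightNil f R := by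
  have hmem : ∀ {w}, w ∈ R + {[]} → w ≠ [] → w ∈ R := fun hw hne =>
    (Language.mem_add _ _ _).mp hw |>.resolve_right hne
  ext w
  rw [mem_tableS]
  constructor
  · rintro ⟨u, hu, v, hv, x, hx, heval, rfl⟩
    simp only [Language.mem_add, mem_tableS]
    have hx' : x = [] ↔ u ++ v = [] := by rw [← evalW_eq_one_iff f, ← heval, evalW_eq_one_iff]
    rcases eq_or_ne u [] with rfl | hu'
    · rcases eq_or_ne v [] with rfl | hv'
      · obtain rfl := hx'.mpr rfl
        exact .inl (.inl (.inr rfl))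
      · have hx'' : x ≠ [] := fun h => hv' (by simpa using hx'.mp h)
        exact .inl (.inr ⟨v, hmem hv hv', x, hmem hx hx'', heval, rfl⟩)
    · have hx'' : x ≠ [] := fun h => hu' (List.append_eq_nil_iff.mp (hx'.mp h)).1
      rcases eq_or_ne v [] with rfl | hv'
      · exact .inr ⟨u, hmem hu hu', x, hmem hx hx'', by simpa using heval, rfl⟩
      · exact .inl (.inl (.inl ⟨u, hmem hu hu', v, hmem hv hv', x, hmem hx hx'', heval, rfl⟩))
  · have hR : ∀ {w}, w ∈ R → w ∈ R + {[]} := fun hw => (Language.mem_add _ _ _).mpr (.inl hw)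
    have hnil : [] ∈ R + {[]} := (Language.mem_add _ _ _).mpr (.inr rfl)
    simp only [Language.mem_add, mem_tableS]
    rintro (((⟨u, hu, v, hv, x, hx, heval, rfl⟩ | h) | ⟨v, hv, x, hx, heval, rfl⟩) |
      ⟨u, hu, x, hx, heval, rfl⟩)
    · exact ⟨u, hR hu, v, hR hv, x, hR hx, heval, rfl⟩
    · exact ⟨[], hnil, [], hnil, [], hnil, rfl, h⟩
    · exact ⟨[], hnil, v, hR hv, x, hR hx, heval, rfl⟩
    · exact ⟨u, hR hu, [], hnil, x, hR hx, by simpa using heval, rfl⟩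

lemma evalW_append_cons_of_mul_eq {u : List A} {a : A} (hu : evalW f u * f a = f a)
    (t : List A) : evalW f (u ++ a :: t) = evalW f (a :: t) := by
  rw [evalW_append, evalW_cons, ← mul_assoc, hu]

lemma tableLeftNil_eq [Fintype A] {R : Language A} (hRne : ∀ w ∈ R, w ≠ []) {U : A → List A}
    (hUR : ∀ a, U a ∈ R) (hU : ∀ a, evalW f (U a) * f a = f a) :
    tableLeftNil f R = ∑ a, {[.inr false, .inl a]} *
      (tableS f R).leftQuotient ((U a).map .inl ++ [.inr false, .inl a]) := by
  ext w
  simp only [Language.mem_sum, Finset.mem_univ, true_and, Language.mem_singleton_mul,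
    mem_leftQuotient_tableS, evalW_append_cons_of_mul_eq f (hU _)]
  constructor
  · rintro ⟨v, hv, x, hx, heval, rfl⟩
    obtain ⟨a, v, rfl⟩ := List.exists_cons_of_ne_nil (hRne v hv)
    exact ⟨a, _, ⟨v, x, hUR a, hv, hx, heval, rfl⟩, by simp [tableWord]⟩
  · rintro ⟨a, _, ⟨v, x, -, hv, hx, heval, rfl⟩, rfl⟩
    exact ⟨a :: v, hv, x, hx, heval, by simp [tableWord]⟩

lemma tableRightNil_eq [Fintype A] {R : Language A} (hRne : ∀ w ∈ R, w ≠ []) {U : A → List A}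
    (hUR : ∀ a, U a ∈ R) (hU : ∀ a, evalW f (U a) * f a = f a) :
    tableRightNil f R = ∑ a, {[.inl a]} *
      ((tableS f R).leftQuotient ((U a).map .inl ++ [.inr false, .inl a])).homImage
        insertMarkOne := by
  ext w
  simp only [Language.mem_sum, Finset.mem_univ, true_and, Language.mem_singleton_mul,
    Language.mem_homImage]
  constructor
  · rintro ⟨u, hu, x, hx, heval, rfl⟩
    obtain ⟨a, u, rfl⟩ := List.exists_cons_of_ne_nil (hRne u hu)
    refine ⟨a, _, ⟨_, (mem_leftQuotient_tableS f).mpr ⟨u, x, hUR a, hu, hx, ?_, rfl⟩, rfl⟩, ?_⟩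
    · rwa [evalW_append_cons_of_mul_eq f (hU a)]
    · rw [flatMap_insertMarkOne]
      simp [tableWord]
  · rintro ⟨a, _, ⟨z, hz, rfl⟩, rfl⟩
    obtain ⟨v, x, -, hv, hx, heval, rfl⟩ := (mem_leftQuotient_tableS f).mp hz
    rw [evalW_append_cons_of_mul_eq f (hU a)] at heval
    refine ⟨a :: v, hv, x, hx, by simpa using heval, ?_⟩
    rw [flatMap_insertMarkOne]
    simp [tableWord]

end Table

lemma exists_mem_evalW_mul_eq_self {A S : Type*} [Semigroup S] {f : A → S} {R : Language A}
    (hcomb : ∀ s : S, ∃ w ∈ R, evalW f w = ↑s) (hvn : ∀ s : S, ∃ x : S, s * x * s = s) (s : S) :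
    ∃ u ∈ R, evalW f u * s = s := by
  obtain ⟨x, hx⟩ := hvn s
  obtain ⟨u, hu, hval⟩ := hcomb (s * x)
  exact ⟨u, hu, by rw [hval, ← WithOne.coe_mul, hx]⟩

theorem vonNeumann_regular_one_extendable_general {A S : Type*} [Fintype A] [Semigroup S]
    (f : A → S)
    (R : Language A) (hRne : ∀ w ∈ R, w ≠ [])
    (hreg : R.IsRegular)
    (hcomb : ∀ s : S, ∃ w ∈ R, evalW f w = ↑s)
    (htab : (tableS f R).IsContextFree)
    (hvn : ∀ s : S, ∃ x : S, s * x * s = s) :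
    (R + {[]} : Language A).IsRegular ∧
    (∀ x : WithOne S, ∃ w ∈ (R + {[]} : Language A), evalW f w = x) ∧
    (tableS f (R + {[]})).IsContextFree := by
  refine ⟨hreg.add Language.isRegular_singleton_nil, fun x => ?_, ?_⟩
  · cases x with
    | one => exact ⟨[], (Language.mem_add _ _ _).mpr (.inr rfl), rfl⟩
    | coe s =>
      obtain ⟨w, hw, hs⟩ := hcomb s
      exact ⟨w, (Language.mem_add _ _ _).mpr (.inl hw), hs⟩
  · choose U hUR hU using fun a => exists_mem_evalW_mul_eq_self hcomb hvn (f a)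
    rw [tableS_add_nil, tableLeftNil_eq f hRne hUR hU, tableRightNil_eq f hRne hUR hU]
    have hquot (a : A) := htab.leftQuotient ((U a).map .inl ++ [.inr false, .inl a])
    refine ((htab.add (Language.isContextFree_singleton _)).add ?_).add ?_
    · exact .sum _ fun a _ => (Language.isContextFree_singleton _).mul (hquot a)
    · exact .sum _ fun a _ => (Language.isContextFree_singleton _).mul ((hquot a).homImage _)

/-- Every von Neumann regular semigroup (`∀ s, ∃ x, s x s = s`) that is
word-hyperbolic with respect to a regular combing `R ⊆ A⁺` is `1`-extendable:
`S^1` is word-hyperbolic with respect to `R ∪ {ε}`. -/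
theorem vonNeumann_regular_one_extendable {A S : Type*} [Fintype A] [Semigroup S]
    (f : A → S)
    (hgen : ∀ s : S, ∃ w : List A, w ≠ [] ∧ evalW f w = ↑s)
    (R : Language A) (hRne : ∀ w ∈ R, w ≠ [])
    (hreg : R.IsRegular)
    (hcomb : ∀ s : S, ∃ w ∈ R, evalW f w = ↑s)
    (htab : (tableS f R).IsContextFree)
    (hvn : ∀ s : S, ∃ x : S, s * x * s = s) :
    (R + {[]} : Language A).IsRegular ∧
    (∀ x : WithOne S, ∃ w ∈ (R + {[]} : Language A), evalW f w = x) ∧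
    (tableS f (R + {[]})).IsContextFree :=
  vonNeumann_regular_one_extendable_general f R hRne hreg hcomb htab hvn
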